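/- Let L : ZMod (3d) → ZMod 3 be any labeling of the vertices of the 3d-cycle (d ≥ 1) such that adjacent vertices receive distinct labels. If the degree of the induced map to the 3-cycle (number of edges with labels (0,1) in cyclic order minus number with labels (1,0)) equals d, then the cycle has at least 3d vertices; more precisely, any cyclically labeled cycle on m vertices with adjacent labels distinct and induced degree d satisfies m ≥ 3d. Hence λ(1,d) = 3d for d ≥ 1. -/
import Mathlib


lemma zmod3_sum {M : Type*} [AddCommMonoid M] (f : ZMod 3 → M) :
    ∑ x : ZMod 3, f x = f 0 + f 1 + f 2 := by
  have h : (Finset.univ : Finset (ZMod 3)) = {0, 1, 2} := by decide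
  rw [h, Finset.sum_insert (by decide), Finset.sum_insert (by decide), Finset.sum_singleton,
    add_assoc]

theorem stmt_8 (m d : ℕ) [NeZero m] (hm : 3 ≤ m) (hd : 1 ≤ d)
    (L : ZMod m → ZMod 3)
    (hadj : ∀ i : ZMod m, L i ≠ L (i + 1))
    (hdeg : ((Finset.univ.filter (fun i : ZMod m => L i = 0 ∧ L (i + 1) = 1)).card : ℤ) -
        ((Finset.univ.filter (fun i : ZMod m => L i = 1 ∧ L (i + 1) = 0)).card : ℤ) = d) :
    3 * d ≤ m := by
  classical
  set N : ZMod 3 → ZMod 3 → ℕ := fun x y =>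
    (Finset.univ.filter (fun i : ZMod m => L i = x ∧ L (i + 1) = y)).card with hN
  have hdeg' : (N 0 1 : ℤ) - N 1 0 = d := hdeg
  have hNxx : ∀ x, N x x = 0 := by
    intro x
    simp only [hN, Finset.card_eq_zero, Finset.filter_eq_empty_iff]
    rintro i _ ⟨h1, h2⟩
    exact hadj i (h1.trans h2.symm)
  have hrow : ∀ x : ZMod 3,
      (Finset.univ.filter (fun i : ZMod m => L i = x)).card = N x 0 + N x 1 + N x 2 := by
    intro x
    rw [Finset.card_eq_sum_card_fiberwise
      (f := fun i : ZMod m => L (i + 1)) (t := (Finset.univ : Finset (ZMod 3)))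
      (fun i _ => Finset.mem_univ _)]
    simp only [Finset.filter_filter]
    rw [zmod3_sum]
  have hcol : ∀ x : ZMod 3,
      (Finset.univ.filter (fun i : ZMod m => L (i + 1) = x)).card = N 0 x + N 1 x + N 2 x := by
    intro x
    rw [Finset.card_eq_sum_card_fiberwise
      (f := fun i : ZMod m => L i) (t := (Finset.univ : Finset (ZMod 3)))
      (fun i _ => Finset.mem_univ _)]
    simp only [Finset.filter_filter]
    rw [zmod3_sum]
    simp only [hN, and_comm]
  have hshift : ∀ x : ZMod 3,
      (Finset.univ.filter (fun i : ZMod m => L (i + 1) = x)).card =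
      (Finset.univ.filter (fun i : ZMod m => L i = x)).card := by
    intro x
    apply Finset.card_bij (fun i _ => i + 1)
    · intro a ha
      simp only [Finset.mem_filter, Finset.mem_univ, true_and] at ha ⊢
      exact ha
    · intro a _ b _ h
      exact add_right_cancel h
    · intro b hb
      refine ⟨b - 1, ?_, by ring⟩
      simp only [Finset.mem_filter, Finset.mem_univ, true_and, sub_add_cancel] at hb ⊢
      exact hb
  have heq : ∀ x : ZMod 3, N x 0 + N x 1 + N x 2 = N 0 x + N 1 x + N 2 x := by
    intro x
    rw [← hrow, ← hcol, hshift]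
  have htot : m = N 0 0 + N 0 1 + N 0 2 + (N 1 0 + N 1 1 + N 1 2) + (N 2 0 + N 2 1 + N 2 2) := by
    have h0 : (Finset.univ : Finset (ZMod m)).card = m := by
      rw [Finset.card_univ, ZMod.card]
    rw [← h0, Finset.card_eq_sum_card_fiberwise
      (f := fun i : ZMod m => L i) (t := (Finset.univ : Finset (ZMod 3)))
      (fun i _ => Finset.mem_univ _)]
    rw [zmod3_sum]
    rw [hrow 0, hrow 1, hrow 2]
  have e1 := heq 1
  have e2 := heq 2
  have n00 := hNxx 0
  have n11 := hNxx 1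
  have n22 := hNxx 2
  omega
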